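/- Let λ₁ > ⋯ > λ_N be distinct reals interlaced by λ̂₁ ≥ λ₁ ≥ λ̂₂ ≥ ⋯ ≥ λ̂_N ≥ λ_N, and define yᵢ = √( ∏ⱼ |λᵢ − λ̂ⱼ| / ∏_{j≠i} |λᵢ − λⱼ| ). Then the eigenvalues of diag(λ) + yyᵀ are exactly λ̂₁, …, λ̂_N. -/

import Mathlib

/-!
For `t` distinct from every `λⱼ`, the matrix determinant lemma gives
`det (t - diag λ - y yᵀ) = ∏ⱼ (t - λⱼ) - ∑ᵢ yᵢ² ∏_{j ≠ i} (t - λⱼ)`; holding at infinitely many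
`t`, this is an identity of polynomials for the characteristic polynomial. Lagrange interpolation at the distinct
nodes `λᵢ` writes the monic `∏ⱼ (X - λ̂ⱼ)` in the same shape, with `-yᵢ²` replaced by
`rᵢ = ∏ⱼ (λᵢ - λ̂ⱼ) / ∏_{j ≠ i} (λᵢ - λⱼ)`. Interlacing gives the numerator of `rᵢ` the sign
`(-1)^(i+1)` and its denominator the sign `(-1)^i`, so `rᵢ ≤ 0` and `yᵢ² = |rᵢ| = -rᵢ`.
-/

open Polynomial Finset Lagrange

theorem neg_one_pow_card_mul_prod_nonneg {ι R : Type*} [DecidableEq ι] [CommRing R]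
    [LinearOrder R] [IsStrictOrderedRing R] {s t : Finset ι} {f : ι → R} (hts : t ⊆ s)
    (hneg : ∀ j ∈ t, f j ≤ 0) (hpos : ∀ j ∈ s \ t, 0 ≤ f j) :
    0 ≤ (-1) ^ #t * ∏ j ∈ s, f j := by
  rw [← prod_sdiff hts, mul_left_comm, ← prod_neg]
  exact mul_nonneg (prod_nonneg hpos) (prod_nonneg fun j hj => neg_nonneg.2 (hneg j hj))

theorem Matrix.det_diagonal_add_vecMulVec {n K : Type*} [Fintype n] [DecidableEq n] [Field K]
    {w : n → K} (hw : ∀ i, w i ≠ 0) (u v : n → K) :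
    (diagonal w + vecMulVec u v).det = ∏ i, w i + ∑ i, u i * v i * ∏ j ∈ univ.erase i, w j := by
  have hfac : diagonal w + vecMulVec u v = diagonal w * (1 + vecMulVec (fun i => u i / w i) v) := by
    rw [Matrix.mul_add, Matrix.mul_one, mul_vecMulVec]
    congr
    funext i
    rw [mulVec_diagonal, mul_div_cancel₀ _ (hw i)]
  rw [hfac, det_mul, det_diagonal, vecMulVec_eq Unit, det_one_add_replicateCol_mul_replicateRow,
    mul_add, mul_one, dotProduct, mul_sum]
  refine congrArg _ (sum_congr rfl fun i _ => ?_)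
  rw [← mul_prod_erase univ w (mem_univ i)]
  field_simp [hw i]

theorem Matrix.charpoly_diagonal_add_vecMulVec {n K : Type*} [Fintype n] [DecidableEq n]
    [Field K] [Infinite K] (d u v : n → K) :
    (diagonal d + vecMulVec u v).charpoly
      = nodal univ d - ∑ i, C (u i * v i) * nodal (univ.erase i) d := by
  refine eq_of_infinite_eval_eq _ _ ((Set.finite_range d).infinite_compl.mono fun t ht => ?_)
  have hw : ∀ i, t - d i ≠ 0 := fun i => sub_ne_zero.2 fun h => ht ⟨i, h.symm⟩
  have hmat : scalar n t - (diagonal d + vecMulVec u v)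
      = diagonal (fun i => t - d i) + vecMulVec (-u) v := by
    rw [neg_vecMulVec, ← sub_eq_add_neg, sub_add_eq_sub_sub, scalar_apply, diagonal_sub]
  simp only [Set.mem_ofPred_eq, eval_charpoly, hmat, det_diagonal_add_vecMulVec hw, eval_sub,
    eval_finsetSum, eval_mul, eval_C, eval_nodal]
  simp [sum_neg_distrib, sub_eq_add_neg]

theorem Lagrange.eq_nodal_add_sum_of_monic {ι F : Type*} [DecidableEq ι] [Field F]
    {s : Finset ι} {v : ι → F} (hvs : Set.InjOn v s) {p : F[X]} (hp : p.Monic)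
    (hdeg : p.natDegree = #s) :
    p = nodal s v + ∑ i ∈ s, C (p.eval (v i) * nodalWeight s v i) * nodal (s.erase i) v := by
  have hlt : (p - nodal s v).degree < #s := by
    rw [← hdeg, ← degree_eq_natDegree hp.ne_zero]
    exact degree_sub_lt_left (by rw [degree_nodal, degree_eq_natDegree hp.ne_zero, hdeg])
      hp.ne_zero (by rw [hp.leadingCoeff, nodal_monic.leadingCoeff])
  rw [← sub_eq_iff_eq_add', eq_interpolate hvs hlt, interpolate_apply]
  refine sum_congr rfl fun i hi => ?_
  rw [basis_eq_prod_sub_inv_mul_nodal_div hi, ← nodal_erase_eq_nodal_div hi, eval_sub,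
    eval_nodal_at_node hi, sub_zero, map_mul, mul_assoc]

theorem eval_nodal_mul_nodalWeight_nonpos_of_interlace {N : ℕ} {lam lhat : Fin N → ℝ}
    (hlam : StrictAnti lam) (h₁ : ∀ i, lam i ≤ lhat i)
    (h₂ : ∀ i j : Fin N, (i : ℕ) + 1 = (j : ℕ) → lhat j ≤ lam i) (i : Fin N) :
    (nodal univ lhat).eval (lam i) * nodalWeight univ lam i ≤ 0 := by
  have hnum : 0 ≤ (-1) ^ ((i : ℕ) + 1) * (nodal univ lhat).eval (lam i) := by
    rw [eval_nodal, ← Fin.card_Iic]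
    refine neg_one_pow_card_mul_prod_nonneg (subset_univ _) (fun j hj => ?_) (fun j hj => ?_)
    · linarith [hlam.antitone (mem_Iic.1 hj), h₁ j]
    · have hij : i < j := by simpa using hj
      have hk : (j : ℕ) - 1 < N := by omega
      have hjk : lhat j ≤ lam ⟨j - 1, hk⟩ := h₂ _ _ (show (j : ℕ) - 1 + 1 = j by omega)
      have hki : lam ⟨j - 1, hk⟩ ≤ lam i := hlam.antitone (show (i : ℕ) ≤ j - 1 by omega)
      linarith
  have hweight : 0 ≤ (-1) ^ (i : ℕ) * nodalWeight univ lam i := by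
    rw [nodalWeight, ← Fin.card_Iio]
    refine neg_one_pow_card_mul_prod_nonneg
      (fun j hj => mem_erase.2 ⟨(mem_Iio.1 hj).ne, mem_univ _⟩)
      (fun j hj => inv_nonpos.2 (sub_nonpos.2 (hlam (mem_Iio.1 hj)).le)) (fun j hj => ?_)
    simp only [mem_sdiff, mem_erase, mem_Iio, not_lt] at hj
    exact inv_nonneg.2 (sub_nonneg.2 (hlam (lt_of_le_of_ne hj.2 (Ne.symm hj.1.1))).le)
  have hsign : ((-1 : ℝ) ^ (i : ℕ)) * (-1) ^ (i : ℕ) = 1 := by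
    rw [← mul_pow]; norm_num
  rw [pow_succ] at hnum
  linear_combination mul_nonneg hnum hweight
    - (eval (lam i) (nodal univ lhat) * nodalWeight univ lam i) * hsign

/-- Explicit rank-one perturbation realizing a strictly interlacing spectrum:
with `yᵢ = √(∏ⱼ|λᵢ − λ̂ⱼ| / ∏_{j≠i}|λᵢ − λⱼ|)`, the eigenvalues (with
multiplicity) of `diag(λ) + y yᵀ` are exactly the `λ̂ᵢ`. -/
theorem explicit_rank_one_perturbation (N : ℕ) (lam lhat : Fin N → ℝ)
    (hlam : StrictAnti lam)
    (h₁ : ∀ i : Fin N, lam i ≤ lhat i)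
    (h₂ : ∀ i j : Fin N, (i : ℕ) + 1 = (j : ℕ) → lhat j ≤ lam i)
    (y : Fin N → ℝ)
    (hy : ∀ i, y i = Real.sqrt ((∏ j, |lam i - lhat j|)
        / (∏ j ∈ Finset.univ.erase i, |lam i - lam j|))) :
    (Matrix.diagonal lam + Matrix.vecMulVec y y).charpoly
      = ∏ i : Fin N, (X - C (lhat i)) := by
  have hy2 : ∀ i, y i * y i = -((nodal univ lhat).eval (lam i) * nodalWeight univ lam i) := by
    intro i
    rw [hy, Real.mul_self_sqrt (by positivity),
      ← abs_of_nonpos (eval_nodal_mul_nodalWeight_nonpos_of_interlace hlam h₁ h₂ i)]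
    simp [eval_nodal, nodalWeight, abs_mul, abs_prod, div_eq_mul_inv, prod_inv_distrib]
  calc (Matrix.diagonal lam + Matrix.vecMulVec y y).charpoly
      = nodal univ lam - ∑ i, C (y i * y i) * nodal (univ.erase i) lam :=
        Matrix.charpoly_diagonal_add_vecMulVec lam y y
    _ = nodal univ lam
          + ∑ i, C ((nodal univ lhat).eval (lam i) * nodalWeight univ lam i)
            * nodal (univ.erase i) lam := by
        simp [hy2, sub_eq_add_neg, sum_neg_distrib]
    _ = nodal univ lhat :=
        (eq_nodal_add_sum_of_monic hlam.injective.injOn nodal_monic natDegree_nodal).symm
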